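/- arXiv:1205.5981 — 4 statements merged into one kernel-verified Lean document; each statement's English description precedes it below -/
import Mathlib

section
/- Let K be a field of characteristic 0, let d : K → K be any derivation, and let S be a set of polynomials in K[X₁,…,Xₙ] all of whose coefficients are algebraic over ℚ. Define TV(S) ⊆ Kⁿ × Kⁿ as the set of pairs (a, u) such that for every Q ∈ S, Q(a) = 0 and ∑_{i=1}^n (∂Q/∂Xᵢ)(a)·uᵢ = 0. Then for all a, u ∈ Kⁿ, (a, u) ∈ TV(S) if and only if (a, u + d(a)) ∈ TV(S), where d(a) = (d(a₁),…,d(aₙ)). -/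
open MvPolynomial Polynomial

/-- Package an additive Leibniz map on a char-zero field as a `ℚ`-derivation. -/
noncomputable def derivationOfLeibniz {K : Type*} [Field K] [CharZero K] (d : K → K)
    (hadd : ∀ x y : K, d (x + y) = d x + d y)
    (hleib : ∀ x y : K, d (x * y) = x * d y + y * d x) : Derivation ℚ K K where
  toLinearMap := (AddMonoidHom.mk' d hadd).toRatLinearMap
  map_one_eq_zero' := by
    have h := hleib 1 1
    simp only [one_mul] at h
    simpa using (left_eq_add.mp h)
  leibniz' := fun x y => by
    simpa [smul_eq_mul] using hleib x y

@[simp] lemma derivationOfLeibniz_apply {K : Type*} [Field K] [CharZero K] (d : K → K)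
    (hadd : ∀ x y : K, d (x + y) = d x + d y)
    (hleib : ∀ x y : K, d (x * y) = x * d y + y * d x) (x : K) :
    derivationOfLeibniz d hadd hleib x = d x := rfl

/-- A `ℚ`-derivation of a char-zero field kills every algebraic element. -/
lemma derivation_eq_zero_of_isAlgebraic {K : Type*} [Field K] [CharZero K]
    (D : Derivation ℚ K K) {c : K} (hc : IsAlgebraic ℚ c) : D c = 0 := by
  have hint : IsIntegral ℚ c := hc.isIntegral
  have hP : Polynomial.aeval c (minpoly ℚ c) = 0 := minpoly.aeval ℚ c
  have h := D.comp_aeval_eq (a := c) (minpoly ℚ c)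
  rw [hP, map_zero] at h
  have hne : Polynomial.aeval c (Polynomial.derivative (minpoly ℚ c)) ≠ 0 :=
    ((minpoly.irreducible hint).separable).aeval_derivative_ne_zero hP
  have h' := h.symm
  rw [smul_eq_mul] at h'
  rcases mul_eq_zero.mp h' with h'' | h''
  · exact absurd h'' hne
  · exact h''

/-- Chain rule for evaluation of a multivariate polynomial whose coefficients are
killed by the derivation. -/
lemma derivation_eval_eq {K : Type*} [Field K] [CharZero K] (D : Derivation ℚ K K)
    {n : ℕ} (a : Fin n → K) (Q : MvPolynomial (Fin n) K)
    (hQ : ∀ m, D (MvPolynomial.coeff m Q) = 0) :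
    D (MvPolynomial.eval a Q) =
      ∑ i : Fin n, MvPolynomial.eval a (MvPolynomial.pderiv i Q) * D (a i) := by
  have hmem : Q ∈ Algebra.adjoin ℚ
      ((MvPolynomial.C '' {x : K | D x = 0}) ∪ Set.range MvPolynomial.X) := by
    rw [Q.as_sum]
    refine Subalgebra.sum_mem _ fun v hv => ?_
    rw [MvPolynomial.monomial_eq, Finsupp.prod]
    refine Subalgebra.mul_mem _
      (Algebra.subset_adjoin (Set.mem_union_left _ ⟨_, hQ v, rfl⟩)) ?_
    exact Subalgebra.prod_mem _ fun i _ =>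
      Subalgebra.pow_mem _ (Algebra.subset_adjoin (Set.mem_union_right _ (Set.mem_range_self i))) _
  clear hQ
  induction hmem using Algebra.adjoin_induction with
  | mem x hx =>
    rcases hx with ⟨c, hc, rfl⟩ | ⟨j, rfl⟩
    · simp only [Set.mem_setOf_eq] at hc
      simp [hc, MvPolynomial.pderiv_C]
    · classical
      simp [MvPolynomial.pderiv_X, Pi.single_apply, Finset.sum_ite_eq,
        eq_comm (a := j)]
  | algebraMap r =>
    have h1 : (algebraMap ℚ (MvPolynomial (Fin n) K)) r =
        MvPolynomial.C ((algebraMap ℚ K) r) := rfl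
    rw [h1]
    have h2 : D ((algebraMap ℚ K) r) = 0 := D.map_algebraMap r
    simp only [MvPolynomial.eval_C, map_zero, MvPolynomial.pderiv_C,
      zero_mul, Finset.sum_const_zero]
    exact h2
  | add p q hp hq ihp ihq =>
    simp only [map_add, ihp, ihq, add_mul, Finset.sum_add_distrib]
  | mul p q hp hq ihp ihq =>
    rw [map_mul, D.leibniz, smul_eq_mul, smul_eq_mul, ihp, ihq]
    simp only [MvPolynomial.pderiv_mul, map_add, map_mul, add_mul,
      Finset.sum_add_distrib]
    rw [add_comm]
    congr 1 <;> (rw [Finset.mul_sum]; exact Finset.sum_congr rfl fun i _ => by ring)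

/-- The tangent-bundle set of a family `S` of polynomials in `n` variables over `K`:
pairs `(a, u)` such that for every `Q ∈ S`, `Q(a) = 0` and `∑ i, (∂Q/∂Xᵢ)(a) * uᵢ = 0`. -/
def tangentBundleSet {K : Type*} [CommRing K] {n : ℕ}
    (S : Set (MvPolynomial (Fin n) K)) : Set ((Fin n → K) × (Fin n → K)) :=
  {p | ∀ Q ∈ S, MvPolynomial.eval p.1 Q = 0 ∧
    ∑ i : Fin n, MvPolynomial.eval p.1 (MvPolynomial.pderiv i Q) * p.2 i = 0}

/-- Lemma 3.2: over a field of characteristic `0`, if every polynomial in `S` has all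
its coefficients algebraic over `ℚ`, then for any derivation `d` of `K`,
`(a, u) ∈ TV(S)` iff `(a, u + d(a)) ∈ TV(S)`. -/
theorem tangentBundleSet_shift_mem_iff_of_algebraic_coeffs {K : Type*} [Field K]
    [CharZero K] (d : K → K)
    (hadd : ∀ x y : K, d (x + y) = d x + d y)
    (hleib : ∀ x y : K, d (x * y) = x * d y + y * d x)
    {n : ℕ} (S : Set (MvPolynomial (Fin n) K))
    (hS : ∀ Q ∈ S, ∀ m, IsAlgebraic ℚ (MvPolynomial.coeff m Q))
    (a u : Fin n → K) :
    (a, u) ∈ tangentBundleSet S ↔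
      (a, fun i => u i + d (a i)) ∈ tangentBundleSet S := by
  set D := derivationOfLeibniz d hadd hleib with hD
  have key : ∀ Q ∈ S, MvPolynomial.eval a Q = 0 →
      ∑ i : Fin n, MvPolynomial.eval a (MvPolynomial.pderiv i Q) * d (a i) = 0 := by
    intro Q hQ heval
    have hcoeff : ∀ m, D (MvPolynomial.coeff m Q) = 0 := fun m =>
      derivation_eq_zero_of_isAlgebraic D (hS Q hQ m)
    have h := derivation_eval_eq D a Q hcoeff
    rw [heval, map_zero] at h
    have : ∀ i, D (a i) = d (a i) := fun i => rfl
    simpa [this] using h.symm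
  constructor
  · rintro h Q hQ
    obtain ⟨h1, h2⟩ := h Q hQ
    refine ⟨h1, ?_⟩
    simp only [mul_add, Finset.sum_add_distrib, h2, key Q hQ h1, add_zero]
  · rintro h Q hQ
    obtain ⟨h1, h2⟩ := h Q hQ
    refine ⟨h1, ?_⟩
    simp only [mul_add, Finset.sum_add_distrib, key Q hQ h1, add_zero] at h2
    exact h2
end

section
/- Let K be a field, F a subfield of K, and g₁, g₂, g₃, g₄ ∈ F. Suppose a, b, c ∈ K are algebraically independent over F and d ∈ K satisfies a·c + b·d = 1. If (g₁ + a)·(g₃ + c) + (g₂ + b)·(g₄ + d) = 1, then g₁ = g₂ = g₃ = g₄ = 0. -/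
/-! Eliminating `d` turns the relation into a polynomial over `F` vanishing at `(a, b, c)`. By
algebraic independence that polynomial is zero, and its values at four points of `F³` read off
`g₁, …, g₄`. -/

open MvPolynomial

/-- `X₁ · ((g₁ + X₀)(g₃ + X₂) + (g₂ + X₁)(g₄ + d) - 1)` after substituting `X₁ d = 1 - X₀ X₂`. -/
noncomputable def stabilizerPoly {R : Type*} [CommRing R] (g₁ g₂ g₃ g₄ : R) :
    MvPolynomial (Fin 3) R :=
  X 1 * ((C g₁ + X 0) * (C g₃ + X 2) - 1) + (C g₂ + X 1) * (C g₄ * X 1 + 1 - X 0 * X 2)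

theorem aeval_stabilizerPoly_eq_zero {R A : Type*} [CommRing R] [CommRing A] [Algebra R A]
    {g₁ g₂ g₃ g₄ : R} {a b c d : A} (habcd : a * c + b * d = 1)
    (h : (algebraMap R A g₁ + a) * (algebraMap R A g₃ + c)
      + (algebraMap R A g₂ + b) * (algebraMap R A g₄ + d) = 1) :
    aeval ![a, b, c] (stabilizerPoly g₁ g₂ g₃ g₄) = 0 := by
  simp only [stabilizerPoly, map_add, map_sub, map_mul, map_one, aeval_C, aeval_X,
    Matrix.cons_val_zero, Matrix.cons_val_one, Matrix.cons_val_two, Matrix.head_cons,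
    Matrix.tail_cons]
  linear_combination b * h - (algebraMap R A g₂ + b) * habcd

theorem eq_zero_of_stabilizerPoly_eq_zero {R : Type*} [CommRing R] {g₁ g₂ g₃ g₄ : R}
    (hp : stabilizerPoly g₁ g₂ g₃ g₄ = 0) : g₁ = 0 ∧ g₂ = 0 ∧ g₃ = 0 ∧ g₄ = 0 := by
  have hv (x y z : R) := congrArg (eval ![x, y, z]) hp
  have h₀ := hv 0 0 0
  have h₁ := hv 0 1 0
  have h₂ := hv 1 1 0
  have h₃ := hv 0 1 1
  simp only [stabilizerPoly, map_add, map_sub, map_mul, map_one, map_zero, eval_C, eval_X,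
    Matrix.cons_val_zero, Matrix.cons_val_one, Matrix.cons_val_two, Matrix.head_cons,
    Matrix.tail_cons] at h₀ h₁ h₂ h₃
  refine ⟨?_, ?_, ?_, ?_⟩
  · linear_combination h₃ - h₁
  · linear_combination h₀
  · linear_combination h₂ - h₁
  · linear_combination h₁ - h₀ - g₃ * (h₃ - h₁) - g₄ * h₀

/-- First computation in Theorem 3.8: if `a, b, c` are algebraically independent over a
subfield `F`, `a·c + b·d = 1`, and `g₁, g₂, g₃, g₄ ∈ F` satisfy
`(g₁+a)·(g₃+c) + (g₂+b)·(g₄+d) = 1`, then `g₁ = g₂ = g₃ = g₄ = 0`. -/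
theorem stabilizer_trivial_field_part {K : Type*} [Field K] (F : Subfield K)
    (g₁ g₂ g₃ g₄ : K) (hg₁ : g₁ ∈ F) (hg₂ : g₂ ∈ F) (hg₃ : g₃ ∈ F) (hg₄ : g₄ ∈ F)
    (a b c d : K) (hind : AlgebraicIndependent F ![a, b, c])
    (habcd : a * c + b * d = 1)
    (h : (g₁ + a) * (g₃ + c) + (g₂ + b) * (g₄ + d) = 1) :
    g₁ = 0 ∧ g₂ = 0 ∧ g₃ = 0 ∧ g₄ = 0 := by
  lift g₁ to F using hg₁
  lift g₂ to F using hg₂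
  lift g₃ to F using hg₃
  lift g₄ to F using hg₄
  obtain ⟨h₁, h₂, h₃, h₄⟩ := eq_zero_of_stabilizerPoly_eq_zero <|
    hind.eq_zero_of_aeval_eq_zero _ (aeval_stabilizerPoly_eq_zero habcd h)
  simp [h₁, h₂, h₃, h₄]
end

section
/- Let K be a field, F a subfield of K, and x, y, w, z ∈ F. Suppose a, b, c ∈ K are algebraically independent over F and d ∈ K satisfies a·c + b·d = 1. If c·x + d·y + a·w + b·z = 0, then x = y = w = z = 0. -/
open MvPolynomial

/-- Second computation in Theorem 3.8: if `a, b, c` are algebraically independent over a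
subfield `F`, `a·c + b·d = 1`, and `x, y, w, z ∈ F` satisfy
`c·x + d·y + a·w + b·z = 0`, then `x = y = w = z = 0`. -/
theorem stabilizer_trivial_fibre_part {K : Type*} [Field K] (F : Subfield K)
    (x y w z : K) (hx : x ∈ F) (hy : y ∈ F) (hw : w ∈ F) (hz : z ∈ F)
    (a b c d : K) (hind : AlgebraicIndependent F ![a, b, c])
    (habcd : a * c + b * d = 1)
    (h : c * x + d * y + a * w + b * z = 0) :
    x = 0 ∧ y = 0 ∧ w = 0 ∧ z = 0 := by
  have hinj : Function.Injective (aeval ![a, b, c] : MvPolynomial (Fin 3) ↥F →ₐ[↥F] K) := hind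
  have hxc : algebraMap (↥F) K ⟨x, hx⟩ = x := rfl
  have hyc : algebraMap (↥F) K ⟨y, hy⟩ = y := rfl
  have hwc : algebraMap (↥F) K ⟨w, hw⟩ = w := rfl
  have hzc : algebraMap (↥F) K ⟨z, hz⟩ = z := rfl
  have hb : b ≠ 0 := by
    intro hb0
    have hac : a * c = 1 := by linear_combination habcd - d * hb0
    have he : (aeval ![a, b, c]) (X 0 * X 2 - 1 : MvPolynomial (Fin 3) ↥F)
        = (aeval ![a, b, c]) (0 : MvPolynomial (Fin 3) ↥F) := by
      simp [hac]
    have h1 := congrArg (aeval (R := ↥F) ![(0 : K), 0, 0]) (hinj he)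
    simp at h1
  set p : MvPolynomial (Fin 3) ↥F :=
    C ⟨x, hx⟩ * (X 1 * X 2) + C ⟨y, hy⟩ * (1 - X 0 * X 2)
      + C ⟨w, hw⟩ * (X 0 * X 1) + C ⟨z, hz⟩ * (X 1 * X 1) with hp
  have hbd : b * d = 1 - a * c := by linear_combination habcd
  have hmul : b * (c * x + d * y + a * w + b * z) = 0 := by rw [h]; ring
  have heval : (aeval ![a, b, c]) p = (aeval ![a, b, c]) (0 : MvPolynomial (Fin 3) ↥F) := by
    simp only [hp, map_add, map_sub, map_mul, map_one, map_zero, aeval_C, aeval_X,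
      Matrix.cons_val_zero, Matrix.cons_val_one, Matrix.head_cons, Matrix.cons_val_two,
      Matrix.tail_cons, hxc, hyc, hwc, hzc]
    linear_combination hmul - y * hbd
  have hp0 : p = 0 := hinj heval
  have hev : ∀ u v t : K, x * (v * t) + y * (1 - u * t) + w * (u * v) + z * (v * v) = 0 := by
    intro u v t
    have he := congrArg (aeval (R := ↥F) ![u, v, t]) hp0
    simpa only [hp, map_add, map_sub, map_mul, map_one, map_zero, aeval_C, aeval_X,
      Matrix.cons_val_zero, Matrix.cons_val_one, Matrix.head_cons, Matrix.cons_val_two,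
      Matrix.tail_cons, hxc, hyc, hwc, hzc] using he
  have h000 := hev 0 0 0
  have h010 := hev 0 1 0
  have h011 := hev 0 1 1
  have h110 := hev 1 1 0
  refine ⟨?_, ?_, ?_, ?_⟩
  · linear_combination h011 - h010
  · linear_combination h000
  · linear_combination h110 - h010
  · linear_combination h010 - h000
end

section
/- Let K be a field of characteristic 0, let a, b, c ∈ K be algebraically independent over ℚ, and let d = (1 - a·c)/b. Suppose c₁ ∈ K is transcendental over ℚ(a, b, c) and d₁ ∈ K satisfies a·c₁ + b·d₁ = 1. Then the four elements c, d, c₁, d₁ are algebraically independent over ℚ, and a and b belong to the subfield ℚ(c, d, c₁, d₁). -/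
/-!
From `a·c + b·d = 1 = a·c₁ + b·d₁` Cramer's rule gives `a` and `b` as rational functions of
`c, d, c₁, d₁`; the determinant `Δ = c·d₁ - c₁·d` is nonzero since `b·Δ = c - c₁` and
`c₁ ≠ c`. So the four algebraically independent elements `a, b, c, c₁` are algebraic over
`ℚ[c, d, c₁, d₁]`, and in the algebraic matroid of `K` over `ℚ` four elements spanning a set
of rank four are themselves independent.
-/

open Set Algebra

theorem AlgebraicIndependent.of_isAlgebraic_adjoin_range {R A ι : Type*} [CommRing R]
    [CommRing A] [IsDomain A] [Algebra R A] [Finite ι] {x y : ι → A}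
    (hx : AlgebraicIndependent R x) (hxy : ∀ i, IsAlgebraic (adjoin R (range y)) (x i)) :
    AlgebraicIndependent R y := by
  have := (faithfulSMul_iff_algebraMap_injective R A).mpr hx.algebraMap_injective
  have := (algebraMap R A).domain_nontrivial
  set M := AlgebraicIndependent.matroid R A
  have hx_closure : range x ⊆ M.closure (range y) := by
    rintro _ ⟨i, rfl⟩
    rw [AlgebraicIndependent.matroid_closure_eq]
    exact hxy i
  have hrk : ENat.card ι ≤ M.eRk (range y) := calc
    ENat.card ι ≤ (range x).encard := hx.injective.encard_range
    _ ≤ M.eRk (M.closure (range y)) :=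
      (AlgebraicIndependent.matroid_indep_iff.mpr hx.to_subtype_range).encard_le_eRk_of_subset
        hx_closure
    _ = M.eRk (range y) := M.eRk_closure_eq _
  -- `#ι ≤ rk (range y) ≤ |range y| ≤ #ι`, so `range y` is independent and `y` injective
  have hcard : (range y).encard ≤ ENat.card ι := by
    simpa only [image_univ, encard_univ] using encard_image_le y univ
  have hy : M.Indep (range y) := (Matroid.indep_iff_eRk_eq_encard_of_finite (finite_range y)).mpr
    ((M.eRk_le_encard _).antisymm (hcard.trans hrk))
  have hy_inj : Function.Injective y :=
    injOn_univ.mp <| Finite.injOn_of_encard_image_eq finite_univ <| by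
      rw [image_univ, encard_univ]
      exact hcard.antisymm (hrk.trans (M.eRk_le_encard _))
  exact .of_subtype_range hy_inj (AlgebraicIndependent.matroid_indep_iff.mp hy)

theorem AlgebraicIndependent.fin_snoc {R A : Type*} [CommRing R] [CommRing A] [Algebra R A]
    {n : ℕ} {x : Fin n → A} (hx : AlgebraicIndependent R x) {a : A}
    (ha : Transcendental (adjoin R (range x)) a) :
    AlgebraicIndependent R (Fin.snoc x a : Fin (n + 1) → A) := by
  convert (algebraicIndependent_equiv (finSuccEquiv' (Fin.last n))).mpr
    ((hx.option_iff_transcendental a).mpr ha) using 1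
  funext j
  refine Fin.lastCases ?_ (fun i ↦ ?_) j <;> simp [finSuccEquiv'_last_apply_castSucc]

theorem Transcendental.of_subring_le {A : Type*} [CommRing A] {S T : Subring A} (hST : S ≤ T)
    {x : A} (h : Transcendental T x) : Transcendental S x := by
  let _ : Algebra S T := (Subring.inclusion hST).toAlgebra
  have : IsScalarTower S T A := .of_algebraMap_eq fun _ ↦ rfl
  exact h.restrictScalars (Subring.inclusion_injective hST)

theorem Algebra.adjoin_rat_toSubring_le_closure {K : Type*} [Field K] [CharZero K] (s : Set K) :
    (adjoin ℚ s).toSubring ≤ (Subfield.closure s).toSubring := by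
  rw [adjoin_eq_ring_closure, Subring.closure_le]
  rintro _ (⟨r, rfl⟩ | hx)
  · exact SubfieldClass.ratCast_mem (Subfield.closure s) r
  · exact Subfield.subset_closure hx

theorem Subfield.isAlgebraic_adjoin_of_mem_closure {R K : Type*} [CommRing R] [Field K]
    [Algebra R K] {s : Set K} {z : K} (hz : z ∈ Subfield.closure s) :
    IsAlgebraic (adjoin R s) z := by
  obtain ⟨p, hp, q, hq, rfl⟩ := Subfield.mem_closure_iff.mp hz
  have hle : Subring.closure s ≤ (adjoin R s).toSubring := Subring.closure_le.mpr subset_adjoin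
  have hmem {r : K} (hr : r ∈ Subring.closure s) : IsAlgebraic (adjoin R s) r :=
    isAlgebraic_algebraMap (⟨r, hle hr⟩ : adjoin R s)
  rcases eq_or_ne q 0 with rfl | hq0
  · simpa using isAlgebraic_zero
  · exact IsAlgebraic.of_mul (mem_nonZeroDivisors_of_ne_zero hq0) (hmem hq)
      (by rw [mul_div_cancel₀ p hq0]; exact hmem hp)

theorem Subfield.mem_closure_of_mul_add_mul_eq_one {K : Type*} [Field K] {a b c d c₁ d₁ : K}
    (h : a * c + b * d = 1) (h₁ : a * c₁ + b * d₁ = 1) (hc : c ≠ c₁) :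
    a ∈ Subfield.closure {c, d, c₁, d₁} ∧ b ∈ Subfield.closure {c, d, c₁, d₁} := by
  set Δ := c * d₁ - c₁ * d
  have hbΔ : b * Δ = c - c₁ := by linear_combination c * h₁ - c₁ * h
  have haΔ : a * Δ = d₁ - d := by linear_combination d₁ * h - d * h₁
  have hΔ : Δ ≠ 0 := right_ne_zero_of_mul (hbΔ ▸ sub_ne_zero.mpr hc)
  obtain ⟨hcF, hdF, hc₁F, hd₁F⟩ : c ∈ Subfield.closure {c, d, c₁, d₁} ∧
      d ∈ Subfield.closure {c, d, c₁, d₁} ∧ c₁ ∈ Subfield.closure {c, d, c₁, d₁} ∧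
      d₁ ∈ Subfield.closure {c, d, c₁, d₁} := by
    refine ⟨?_, ?_, ?_, ?_⟩ <;> exact Subfield.subset_closure (by simp)
  have hΔF : Δ ∈ Subfield.closure {c, d, c₁, d₁} :=
    sub_mem (mul_mem hcF hd₁F) (mul_mem hc₁F hdF)
  rw [eq_div_of_mul_eq hΔ haΔ, eq_div_of_mul_eq hΔ hbΔ]
  exact ⟨div_mem (sub_mem hd₁F hdF) hΔF, div_mem (sub_mem hcF hc₁F) hΔF⟩

/-- The 'moreover' clause of Fact 3.5: if `a, b, c` are algebraically independent over
`ℚ`, `d = (1 - a·c)/b`, `c₁` is transcendental over `ℚ(a, b, c)` and `a·c₁ + b·d₁ = 1`,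
then `c, d, c₁, d₁` are algebraically independent over `ℚ` and `a, b ∈ ℚ(c, d, c₁, d₁)`. -/
theorem independent_realizations_determine_ab {K : Type*} [Field K] [CharZero K]
    (a b c : K) (hind : AlgebraicIndependent ℚ ![a, b, c])
    (d : K) (hd : d = (1 - a * c) / b)
    (c₁ : K) (hc₁ : Transcendental (Subfield.closure ({a, b, c} : Set K)) c₁)
    (d₁ : K) (hd₁ : a * c₁ + b * d₁ = 1) :
    AlgebraicIndependent ℚ ![c, d, c₁, d₁] ∧
    a ∈ Subfield.closure ({c, d, c₁, d₁} : Set K) ∧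
    b ∈ Subfield.closure ({c, d, c₁, d₁} : Set K) := by
  have hb : b ≠ 0 := by simpa using hind.ne_zero 1
  have hd' : a * c + b * d = 1 := by rw [hd]; field_simp; ring
  have habcc₁ : AlgebraicIndependent ℚ ![a, b, c, c₁] := by
    have hc₁' : Transcendental (adjoin ℚ (range ![a, b, c])) c₁ := by
      rw [Matrix.range_cons, Matrix.range_cons_cons_empty, singleton_union]
      exact hc₁.of_subring_le (adjoin_rat_toSubring_le_closure _)
    convert hind.fin_snoc hc₁' using 1
    ext i; fin_cases i <;> rfl
  obtain ⟨haF, hbF⟩ := Subfield.mem_closure_of_mul_add_mul_eq_one hd' hd₁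
    (habcc₁.injective.ne (by decide : (2 : Fin 4) ≠ 3))
  refine ⟨habcc₁.of_isAlgebraic_adjoin_range fun i ↦
    Subfield.isAlgebraic_adjoin_of_mem_closure ?_, haF, hbF⟩
  rw [Matrix.range_cons, Matrix.range_cons, Matrix.range_cons_cons_empty, singleton_union,
    singleton_union]
  fin_cases i
  exacts [haF, hbF, Subfield.subset_closure (by simp), Subfield.subset_closure (by simp)]
end
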